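/- Let P and Q be prunings of a hierarchical tree with |P| = |Q|. Let P_a be the set of nodes of P that are strict ancestors of some node of Q, let P_d be the set of nodes of P that are strict descendants of some node of Q, and let Q_a be the set of nodes of Q that are strict ancestors of some node of P. Assume P_a, P_d and Q_a are nonempty. Let P'_d be the set of nodes of the tree both of whose children belong to P_d, and let n := |P'_d|. For each v ∈ P'_d, let l_v be the length of the path from the (unique) weak ancestor of v in Q_a down to v, and let L := ∑_{v∈P'_d} l_v. Then L ≥ |P_a| − n. -/

import Mathlib

/-- A hierarchical tree: a finite rooted binary tree in which every internal node has exactly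
two children and every leaf carries a real weight. -/
inductive HTree : Type
  | leaf (w : ℝ) : HTree
  | node (l r : HTree) : HTree

namespace HTree

/-- All leaf weights are non-negative. -/
def NonnegWeights : HTree → Prop
  | leaf w => 0 ≤ w
  | node l r => l.NonnegWeights ∧ r.NonnegWeights

/-- The subtree of `t` reached by following the path `p` from the root
(`false` = left child, `true` = right child), if it exists. -/
def subtreeAt : HTree → List Bool → Option HTree
  | t, [] => some t
  | leaf _, _ :: _ => none
  | node l r, b :: p => (if b then r else l).subtreeAt p

/-- `p` is (the path to) a node of `t`. -/
def IsNodePath (t : HTree) (p : List Bool) : Prop := (t.subtreeAt p).isSome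

/-- `p` is (the path to) a leaf of `t`. -/
def IsLeafPath (t : HTree) (p : List Bool) : Prop := ∃ w, t.subtreeAt p = some (leaf w)

/-- The list of weights of the leaves weakly below the root of `t`. -/
def leafWeights : HTree → List ℝ
  | leaf w => [w]
  | node l r => l.leafWeights ++ r.leafWeights

/-- The discrepancy of the root of `t`: `∑_{x ∈ L_t} |w_t/N_t − w(x)|`. -/
noncomputable def disc (t : HTree) : ℝ :=
  (t.leafWeights.map
    (fun x => |t.leafWeights.sum / (t.leafWeights.length : ℝ) - x|)).sum

/-- The discrepancy of the node of `t` at path `p` (junk value `0` if there is no such node). -/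
noncomputable def discAt (t : HTree) (p : List Bool) : ℝ :=
  ((t.subtreeAt p).map disc).getD 0

/-- A pruning of `t`: a finite set of nodes such that every leaf of `t` has exactly one
weak ancestor (i.e. prefix) in the set. -/
def IsPruning (t : HTree) (P : Finset (List Bool)) : Prop :=
  (∀ p ∈ P, t.IsNodePath p) ∧ ∀ q, t.IsLeafPath q → ∃! p, p ∈ P ∧ p <+: q

/-- The discrepancy of a pruning: the sum of the discrepancies of its nodes. -/
noncomputable def discP (t : HTree) (P : Finset (List Bool)) : ℝ := ∑ p ∈ P, t.discAt p

/-- The tree `t` has split quality `q`: for every node and every one of its children,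
the discrepancy of the child is at most `q` times the discrepancy of the parent. -/
def HasSplitQuality (t : HTree) (q : ℝ) : Prop :=
  ∀ p, t.IsNodePath p → ∀ b : Bool, t.IsNodePath (p ++ [b]) →
    t.discAt (p ++ [b]) ≤ q * t.discAt p

end HTree

/-!
Both prunings split into their common nodes and the nodes strictly above or strictly below the
other pruning, so `|P| = |Q|` gives `|P_a| + |P_d| = |Q_a| + |Q_d|`. Every node of `P_a` has at
least two nodes of `Q_d` below it, hence `|P_a| + |Q_a| ≤ |P_d|`.

Fix `u ∈ Q_a`. The nodes of `P` strictly below `u` form an antichain, which has at most one more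
element than it has branch points. Below each branch point there is a cherry `v ∈ P'_d`, and then
`anc v = u`, so the branch points lie on the `l_v + 1` nodes of the paths from `u` to such
cherries. Summing over `u ∈ Q_a` gives `|P_d| - |Q_a| ≤ L + n`.
-/

namespace HTree

theorem subtreeAt_append (t : HTree) (p q : List Bool) :
    t.subtreeAt (p ++ q) = (t.subtreeAt p).bind (·.subtreeAt q) := by
  induction p generalizing t with
  | nil => rfl
  | cons b p ih => cases t <;> simp [subtreeAt, ih]

theorem IsNodePath.of_prefix {t : HTree} {p q : List Bool} (hq : t.IsNodePath q)
    (h : p <+: q) : t.IsNodePath p := by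
  obtain ⟨r, rfl⟩ := h
  simp only [IsNodePath, subtreeAt_append] at hq ⊢
  cases hs : t.subtreeAt p <;> simp_all

theorem exists_isLeafPath (t : HTree) : ∃ q, t.IsLeafPath q := by
  induction t with
  | leaf w => exact ⟨[], w, rfl⟩
  | node l r ihl _ =>
    obtain ⟨q, w, h⟩ := ihl
    exact ⟨false :: q, w, h⟩

theorem IsNodePath.exists_isLeafPath {t : HTree} {p : List Bool} (h : t.IsNodePath p) :
    ∃ l, t.IsLeafPath l ∧ p <+: l := by
  obtain ⟨s, hs⟩ := Option.isSome_iff_exists.mp h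
  obtain ⟨q, w, hq⟩ := s.exists_isLeafPath
  exact ⟨p ++ q, ⟨w, by rw [subtreeAt_append, hs]; exact hq⟩, List.prefix_append _ _⟩

theorem IsNodePath.child {t : HTree} {c p : List Bool} (hp : t.IsNodePath p) (hcp : c <+: p)
    (hne : c ≠ p) (b : Bool) : t.IsNodePath (c ++ [b]) := by
  obtain ⟨_ | ⟨e, m⟩, rfl⟩ := hcp
  · simp at hne
  simp only [IsNodePath, subtreeAt_append] at hp ⊢
  cases hs : t.subtreeAt c with
  | none => simp [hs] at hp
  | some s => cases s <;> cases b <;> simp_all [subtreeAt]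

namespace IsPruning

variable {t : HTree} {P : Finset (List Bool)}

theorem eq_of_prefix (hP : t.IsPruning P) {p p' : List Bool} (hp : p ∈ P) (hp' : p' ∈ P)
    (h : p <+: p') : p = p' := by
  obtain ⟨l, hl, hp'l⟩ := (hP.1 p' hp').exists_isLeafPath
  exact (hP.2 l hl).unique ⟨hp, h.trans hp'l⟩ ⟨hp', hp'l⟩

theorem eq_of_prefix_of_prefix (hP : t.IsPruning P) {p p' l : List Bool} (hp : p ∈ P)
    (hp' : p' ∈ P) (h : p <+: l) (h' : p' <+: l) : p = p' :=
  (List.prefix_or_prefix_of_prefix h h').elim (hP.eq_of_prefix hp hp')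
    fun h => (hP.eq_of_prefix hp' hp h).symm

theorem exists_mem_comparable (hP : t.IsPruning P) {x : List Bool} (hx : t.IsNodePath x) :
    ∃ p ∈ P, p <+: x ∨ x <+: p := by
  obtain ⟨l, hl, hxl⟩ := hx.exists_isLeafPath
  obtain ⟨p, ⟨hp, hpl⟩, -⟩ := hP.2 l hl
  exact ⟨p, hp, List.prefix_or_prefix_of_prefix hpl hxl⟩

theorem exists_mem_prefix_child (hP : t.IsPruning P) {c p : List Bool} (hp : p ∈ P)
    (hcp : c <+: p) (hne : c ≠ p) (b : Bool) : ∃ p' ∈ P, c ++ [b] <+: p' := by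
  obtain ⟨p', hp', h | h⟩ := hP.exists_mem_comparable ((hP.1 p hp).child hcp hne b)
  · rcases List.prefix_concat_iff.mp h with rfl | hp'c
    · exact ⟨_, hp', List.prefix_refl _⟩
    · have := hP.eq_of_prefix hp' hp (hp'c.trans hcp)
      subst this
      exact absurd (hcp.eq_of_length_le hp'c.length_le) hne
  · exact ⟨p', hp', h⟩

theorem exists_cherry (hP : t.IsPruning P) {c p : List Bool} (hp : p ∈ P) (hcp : c <+: p)
    (hne : c ≠ p) : ∃ v, c <+: v ∧ ∀ b, v ++ [b] ∈ P := by
  let D := {d ∈ P.biUnion (fun p => p.inits.toFinset) |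
    c <+: d ∧ ∃ p ∈ P, d <+: p ∧ d ≠ p}
  have hD : ∀ d, d ∈ D ↔ c <+: d ∧ ∃ p ∈ P, d <+: p ∧ d ≠ p := fun d => by
    simp only [D, Finset.mem_filter, Finset.mem_biUnion, List.mem_toFinset, List.mem_inits]
    exact ⟨And.right, fun h => ⟨(h.2.elim fun p hp => ⟨p, hp.1, hp.2.1⟩), h⟩⟩
  obtain ⟨v, hvD, hvmax⟩ := Finset.exists_max_image D List.length
    ⟨c, (hD c).2 ⟨List.prefix_refl c, p, hp, hcp, hne⟩⟩
  obtain ⟨hcv, q, hq, hvq, hvne⟩ := (hD v).1 hvD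
  refine ⟨v, hcv, fun b => ?_⟩
  obtain ⟨p', hp', hvp'⟩ := hP.exists_mem_prefix_child hq hvq hvne b
  by_contra hnot
  have hlong := hvmax _
    ((hD _).2 ⟨hcv.trans (List.prefix_append _ _), p', hp', hvp', fun h => hnot (h ▸ hp')⟩)
  simp at hlong

end IsPruning

theorem eq_of_append_singleton_prefix {c l : List Bool} {b b' : Bool} (h : c ++ [b] <+: l)
    (h' : c ++ [b'] <+: l) : b = b' := by
  rcases List.prefix_or_prefix_of_prefix h h' with h | h
  exacts [by simpa using h, (by simpa using h : b' = b).symm]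

def branchPoints (S : Finset (List Bool)) : Finset (List Bool) :=
  {c ∈ S.biUnion (fun p => p.inits.toFinset) | ∀ b : Bool, ∃ p ∈ S, c ++ [b] <+: p}

section BranchPoints

variable {S T : Finset (List Bool)} {u c : List Bool}

theorem mem_branchPoints : c ∈ branchPoints S ↔ ∀ b : Bool, ∃ p ∈ S, c ++ [b] <+: p := by
  simp only [branchPoints, Finset.mem_filter, Finset.mem_biUnion, List.mem_toFinset,
    List.mem_inits, and_iff_right_iff_imp]
  intro h
  obtain ⟨p, hp, hcp⟩ := h false
  exact ⟨p, hp, (List.prefix_append _ _).trans hcp⟩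

theorem branchPoints_mono (h : S ⊆ T) : branchPoints S ⊆ branchPoints T := fun _ hc =>
  mem_branchPoints.2 fun b =>
    (mem_branchPoints.1 hc b).imp fun _ hp => ⟨h hp.1, hp.2⟩

theorem prefix_of_mem_branchPoints (hS : ∀ p ∈ S, u <+: p) (hc : c ∈ branchPoints S) :
    u <+: c := by
  obtain ⟨p, hp, hcp⟩ := mem_branchPoints.1 hc false
  obtain ⟨q, hq, hcq⟩ := mem_branchPoints.1 hc true
  have key : u <+: c ∨ c ++ [false] <+: u := by
    rcases List.prefix_or_prefix_of_prefix (hS p hp) hcp with h | h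
    · rcases List.prefix_concat_iff.1 h with rfl | h
      exacts [Or.inr (List.prefix_refl _), Or.inl h]
    · exact Or.inr h
  refine key.resolve_right fun h => ?_
  exact absurd (eq_of_append_singleton_prefix (h.trans (hS q hq)) hcq) Bool.false_ne_true

/-- Adding to `S` a path incomparable with all of `S` creates a new branch point: the longest
prefix of `a` that is still a prefix of some element of `S`. -/
theorem exists_mem_branchPoints_insert {a : List Bool} (hS : S.Nonempty)
    (ha : ∀ p ∈ S, ¬ p <+: a ∧ ¬ a <+: p) :
    ∃ c ∈ branchPoints (insert a S), c ∉ branchPoints S := by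
  let K := {i ∈ Finset.range (a.length + 1) | ∃ p ∈ S, a.take i <+: p}
  have h0 : 0 ∈ K := by
    obtain ⟨p, hp⟩ := hS
    simpa [K] using ⟨p, hp⟩
  obtain ⟨k, hkK, hkmax⟩ := Finset.exists_max_image K id ⟨0, h0⟩
  obtain ⟨-, p, hp, hkp⟩ := Finset.mem_filter.1 hkK
  have hk : k < a.length := by
    by_contra! h
    exact (ha p hp).2 (List.take_of_length_le h ▸ hkp)
  have hnew : ∀ q ∈ S, ¬ a.take k ++ [a[k]] <+: q := fun q hq h => by
    have := hkmax (k + 1) (Finset.mem_filter.2 ⟨by simp; omega, q, hq, by simpa using h⟩)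
    simp at this
  obtain ⟨_ | ⟨e, m⟩, rfl⟩ := hkp
  · exact absurd (by simpa using List.take_prefix k a) (ha _ hp).1
  have hpe : a.take k ++ [e] <+: a.take k ++ e :: m := by simp
  have he : e ≠ a[k] := fun h => hnew _ hp (h ▸ hpe)
  refine ⟨a.take k, mem_branchPoints.2 fun b => ?_, fun h => ?_⟩
  · by_cases hb : b = a[k]
    · exact ⟨a, Finset.mem_insert_self _ _, by simp [hb, List.take_prefix]⟩
    · have : b = e := by revert hb he; cases b <;> cases e <;> cases a[k] <;> simp
      exact ⟨_, Finset.mem_insert_of_mem hp, this ▸ hpe⟩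
  · obtain ⟨q, hq, hkq⟩ := mem_branchPoints.1 h a[k]
    exact hnew q hq hkq

theorem card_le_card_branchPoints_add_one (hS : ∀ p ∈ S, ∀ q ∈ S, p <+: q → p = q) :
    S.card ≤ (branchPoints S).card + 1 := by
  induction S using Finset.induction_on with
  | empty => simp
  | insert a S ha ih =>
    have hsub : S ⊆ insert a S := Finset.subset_insert a S
    rcases S.eq_empty_or_nonempty with rfl | hne
    · simp
    have hinc : ∀ p ∈ S, ¬ p <+: a ∧ ¬ a <+: p := fun p hp =>
      ⟨fun h => ha (hS p (hsub hp) a (Finset.mem_insert_self a S) h ▸ hp),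
        fun h => ha ((hS a (Finset.mem_insert_self a S) p (hsub hp) h) ▸ hp)⟩
    obtain ⟨c, hc, hcS⟩ := exists_mem_branchPoints_insert hne hinc
    have hlt : (branchPoints S).card < (branchPoints (insert a S)).card :=
      Finset.card_lt_card
        ((Finset.ssubset_iff_of_subset (branchPoints_mono hsub)).2 ⟨c, hc, hcS⟩)
    have := ih fun p hp q hq => hS p (hsub hp) q (hsub hq)
    rw [Finset.card_insert_of_notMem ha]
    omega

end BranchPoints

def strictAnc (P Q : Finset (List Bool)) : Finset (List Bool) :=
  {p ∈ P | ∃ q ∈ Q, p <+: q ∧ p ≠ q}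

def strictDesc (P Q : Finset (List Bool)) : Finset (List Bool) :=
  {p ∈ P | ∃ q ∈ Q, q <+: p ∧ q ≠ p}

theorem card_strictDesc_le_sum (P Q : Finset (List Bool)) :
    (strictDesc P Q).card ≤ ∑ u ∈ strictAnc Q P, (strictDesc P {u}).card := by
  refine (Finset.card_le_card fun p hp => ?_).trans Finset.card_biUnion_le
  obtain ⟨hpP, q, hq, hqp, hne⟩ := Finset.mem_filter.1 hp
  simp only [Finset.mem_biUnion, strictAnc, strictDesc, Finset.mem_filter,
    Finset.mem_singleton, exists_eq_left]
  exact ⟨q, ⟨hq, p, hpP, hqp, hne⟩, hpP, hqp, hne⟩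

namespace IsPruning

variable {t : HTree} {P Q : Finset (List Bool)}

theorem card_strictAnc_add_card_strictDesc (hQ : t.IsPruning Q)
    (hP : ∀ p ∈ P, t.IsNodePath p) :
    (strictAnc P Q).card + (strictDesc P Q).card = (P \ Q).card := by
  rw [← Finset.card_union_of_disjoint]
  · congr 1
    ext p
    simp only [strictAnc, strictDesc, Finset.mem_union, Finset.mem_filter, Finset.mem_sdiff]
    constructor
    · rintro (⟨hp, q, hq, hpq, hne⟩ | ⟨hp, q, hq, hqp, hne⟩)
      · exact ⟨hp, fun hpQ => hne (hQ.eq_of_prefix hpQ hq hpq)⟩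
      · exact ⟨hp, fun hpQ => hne (hQ.eq_of_prefix hq hpQ hqp)⟩
    · rintro ⟨hp, hpQ⟩
      obtain ⟨q, hq, hqp | hpq⟩ := hQ.exists_mem_comparable (hP p hp)
      · exact Or.inr ⟨hp, q, hq, hqp, fun h => hpQ (h ▸ hq)⟩
      · exact Or.inl ⟨hp, q, hq, hpq, fun h => hpQ (h ▸ hq)⟩
  · refine Finset.disjoint_left.2 fun p hpa hpd => ?_
    obtain ⟨-, q, hq, hpq, hne⟩ := Finset.mem_filter.1 hpa
    obtain ⟨-, q', hq', hq'p, -⟩ := Finset.mem_filter.1 hpd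
    obtain rfl := hQ.eq_of_prefix hq' hq (hq'p.trans hpq)
    exact hne (hpq.eq_of_length_le hq'p.length_le)

/-- Every node of `P` strictly above a node of the pruning `Q` has strict descendants in `Q`
below both of its children. -/
theorem two_mul_card_strictAnc_le (hP : t.IsPruning P) (hQ : t.IsPruning Q) :
    2 * (strictAnc P Q).card ≤ (strictDesc Q P).card := by
  let r : List Bool → List Bool → Prop := fun p q => p <+: q ∧ p ≠ q
  have hm : ∀ p ∈ strictAnc P Q, 2 ≤ ((strictDesc Q P).bipartiteAbove r p).card := by
    intro p hp
    obtain ⟨hpP, q, hq, hpq, hne⟩ := Finset.mem_filter.1 hp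
    have hbelow : ∀ b, ∃ q' ∈ (strictDesc Q P).bipartiteAbove r p, p ++ [b] <+: q' := by
      intro b
      obtain ⟨q', hq', hpq'⟩ := hQ.exists_mem_prefix_child hq hpq hne b
      have hr : r p q' := ⟨(List.prefix_append _ _).trans hpq', fun h => by
        simpa [h] using hpq'.length_le⟩
      have hq'P : q' ∈ strictDesc Q P := Finset.mem_filter.2 ⟨hq', p, hpP, hr⟩
      exact ⟨q', (Finset.mem_bipartiteAbove r).2 ⟨hq'P, hr⟩, hpq'⟩
    obtain ⟨q₀, hq₀, h₀⟩ := hbelow false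
    obtain ⟨q₁, hq₁, h₁⟩ := hbelow true
    refine Finset.one_lt_card.2 ⟨q₀, hq₀, q₁, hq₁, fun h => ?_⟩
    exact Bool.false_ne_true (eq_of_append_singleton_prefix h₀ (h ▸ h₁))
  have hn : ∀ q ∈ strictDesc Q P, ((strictAnc P Q).bipartiteBelow r q).card ≤ 1 := by
    refine fun q _ => Finset.card_le_one.2 fun p hp p' hp' => ?_
    obtain ⟨hp, hpq, -⟩ := (Finset.mem_bipartiteBelow r).1 hp
    obtain ⟨hp', hp'q, -⟩ := (Finset.mem_bipartiteBelow r).1 hp'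
    exact hP.eq_of_prefix_of_prefix (Finset.mem_filter.1 hp).1 (Finset.mem_filter.1 hp').1 hpq hp'q
  have := Finset.card_mul_le_card_mul r hm hn
  omega

theorem card_strictAnc_add_card_strictAnc_le (hP : t.IsPruning P) (hQ : t.IsPruning Q)
    (hcard : P.card = Q.card) :
    (strictAnc P Q).card + (strictAnc Q P).card ≤ (strictDesc P Q).card := by
  have hPQ := hQ.card_strictAnc_add_card_strictDesc hP.1
  have hQP := hP.card_strictAnc_add_card_strictDesc hQ.1
  have hsdiff := Finset.card_sdiff_comm hcard
  have := hP.two_mul_card_strictAnc_le hQ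
  omega

/-- Every branch point of the nodes of `P` below `u` lies on the path from `u` to a cherry of
`P`, i.e. a node both of whose children are in `P`. -/
theorem card_strictDesc_singleton_le (hP : t.IsPruning P) {u : List Bool}
    {C : Finset (List Bool)} (hC : ∀ v, u <+: v → (∀ b, v ++ [b] ∈ P) → v ∈ C)
    (hCu : ∀ v ∈ C, u <+: v) :
    ((strictDesc P {u}).card : ℤ) ≤ ∑ v ∈ C, ((v.length : ℤ) - u.length + 1) + 1 := by
  set S := strictDesc P {u}
  have hSP : S ⊆ P := Finset.filter_subset _ _
  have hSu : ∀ p ∈ S, u <+: p := fun p hp => by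
    obtain ⟨-, q, hq, hqp, -⟩ := Finset.mem_filter.1 hp
    exact Finset.mem_singleton.1 hq ▸ hqp
  have hcount : S.card ≤ (branchPoints S).card + 1 :=
    card_le_card_branchPoints_add_one fun p hp q hq => hP.eq_of_prefix (hSP hp) (hSP hq)
  have hsub : branchPoints S ⊆
      C.biUnion fun v => (Finset.Icc u.length v.length).image v.take := by
    intro c hc
    have huc := prefix_of_mem_branchPoints hSu hc
    obtain ⟨p, hp, hcp⟩ := mem_branchPoints.1 hc false
    obtain ⟨v, hcv, hv⟩ := hP.exists_cherry (hSP hp) ((List.prefix_append _ _).trans hcp)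
      fun h => by simpa [h] using hcp.length_le
    simp only [Finset.mem_biUnion, Finset.mem_image, Finset.mem_Icc]
    exact ⟨v, hC v (huc.trans hcv) hv, c.length, ⟨huc.length_le, hcv.length_le⟩,
      (List.prefix_iff_eq_take.1 hcv).symm⟩
  have hpath : ∀ v ∈ C,
      (((Finset.Icc u.length v.length).image v.take).card : ℤ) ≤ v.length - u.length + 1 := by
    intro v hv
    have := (Finset.card_image_le (s := Finset.Icc u.length v.length) (f := v.take)).trans_eq
      (Nat.card_Icc u.length v.length)
    have := (hCu v hv).length_le
    omega
  calc (S.card : ℤ) ≤ (branchPoints S).card + 1 := by exact_mod_cast hcount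
    _ ≤ ∑ v ∈ C, (((Finset.Icc u.length v.length).image v.take).card : ℤ) + 1 := by
      gcongr
      exact_mod_cast (Finset.card_le_card hsub).trans Finset.card_biUnion_le
    _ ≤ ∑ v ∈ C, ((v.length : ℤ) - u.length + 1) + 1 := by
      gcongr with v hv
      exact hpath v hv

theorem card_strictDesc_singleton_sub_one_le (hP : t.IsPruning P) (hQ : t.IsPruning Q)
    {C : Finset (List Bool)}
    (hC : ∀ v, t.IsNodePath v → (∀ b, v ++ [b] ∈ strictDesc P Q) → v ∈ C)
    {anc : List Bool → List Bool} (hanc : ∀ v ∈ C, anc v ∈ Q ∧ anc v <+: v)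
    {u : List Bool} (hu : u ∈ Q) :
    ((strictDesc P {u}).card : ℤ) - 1 ≤
      ∑ v ∈ C with anc v = u, ((v.length : ℤ) - (anc v).length + 1) := by
  have hcherry : ∀ v, u <+: v → (∀ b, v ++ [b] ∈ P) → v ∈ {w ∈ C | anc w = u} := by
    intro v huv hv
    have hvC : v ∈ C := hC v ((hP.1 _ (hv false)).of_prefix (List.prefix_append _ _))
      fun b => Finset.mem_filter.2 ⟨hv b, u, hu, huv.trans (List.prefix_append _ _),
        fun h => by simpa [h] using huv.length_le⟩
    exact Finset.mem_filter.2
      ⟨hvC, hQ.eq_of_prefix_of_prefix (hanc v hvC).1 hu (hanc v hvC).2 huv⟩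
  have := hP.card_strictDesc_singleton_le hcherry fun v hv =>
    (Finset.mem_filter.1 hv).2 ▸ (hanc v (Finset.mem_filter.1 hv).1).2
  rw [Finset.sum_congr rfl fun v hv => by rw [(Finset.mem_filter.1 hv).2]]
  omega

end IsPruning

end HTree

theorem stmt9_general (t : HTree) (P Q : Finset (List Bool))
    (hP : t.IsPruning P) (hQ : t.IsPruning Q) (hcard : P.card = Q.card)
    (Pa Pd Qa P'd : Finset (List Bool))
    (hPa : ∀ v, v ∈ Pa ↔ v ∈ P ∧ ∃ u ∈ Q, v <+: u ∧ v ≠ u)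
    (hPd : ∀ v, v ∈ Pd ↔ v ∈ P ∧ ∃ u ∈ Q, u <+: v ∧ u ≠ v)
    (hQa : ∀ u, u ∈ Qa ↔ u ∈ Q ∧ ∃ v ∈ P, u <+: v ∧ u ≠ v)
    (hP'd : ∀ v, v ∈ P'd ↔ t.IsNodePath v ∧ v ++ [false] ∈ Pd ∧ v ++ [true] ∈ Pd)
    (anc : List Bool → List Bool)
    (hanc : ∀ v ∈ P'd, anc v ∈ Qa ∧ anc v <+: v) :
    (Pa.card : ℤ) - (P'd.card : ℤ) ≤ ∑ v ∈ P'd, ((v.length : ℤ) - ((anc v).length : ℤ)) := by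
  obtain rfl : Pa = HTree.strictAnc P Q := by ext; simp [hPa, HTree.strictAnc]
  obtain rfl : Pd = HTree.strictDesc P Q := by ext; simp [hPd, HTree.strictDesc]
  obtain rfl : Qa = HTree.strictAnc Q P := by ext; simp [hQa, HTree.strictAnc]
  have hlocal : ∀ u ∈ HTree.strictAnc Q P, ((HTree.strictDesc P {u}).card : ℤ) - 1 ≤
      ∑ v ∈ P'd with anc v = u, ((v.length : ℤ) - (anc v).length + 1) := fun u hu =>
    hP.card_strictDesc_singleton_sub_one_le hQ
      (fun v hv hvPd => (hP'd v).2 ⟨hv, hvPd false, hvPd true⟩)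
      (fun v hv => ⟨((hQa _).1 (hanc v hv).1).1, (hanc v hv).2⟩) ((hQa u).1 hu).1
  have hbal := hP.card_strictAnc_add_card_strictAnc_le hQ hcard
  have hcover := HTree.card_strictDesc_le_sum P Q
  calc ((HTree.strictAnc P Q).card : ℤ) - P'd.card
      ≤ ∑ u ∈ HTree.strictAnc Q P, (((HTree.strictDesc P {u}).card : ℤ) - 1)
          - P'd.card := by
        rw [Finset.sum_sub_distrib, Finset.sum_const, nsmul_one]
        zify at hcover
        omega
    _ ≤ ∑ u ∈ HTree.strictAnc Q P, ∑ v ∈ P'd with anc v = u,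
          ((v.length : ℤ) - (anc v).length + 1) - P'd.card := by
        gcongr with u hu
        exact hlocal u hu
    _ = ∑ v ∈ P'd, ((v.length : ℤ) - (anc v).length) := by
        rw [Finset.sum_fiberwise_of_maps_to fun v hv => (hanc v hv).1, Finset.sum_add_distrib]
        simp

/-- Claim 4 inside the proof of Lemma 5.3: with `P'_d` the set of nodes both of whose
children lie in `P_d`, `n := |P'_d|`, and `l_v` the length of the path from the unique weak
ancestor of `v` in `Q_a` down to `v`, the total length `L := ∑_{v ∈ P'_d} l_v` satisfies
`L ≥ |P_a| − n`. -/
theorem stmt9 (t : HTree) (P Q : Finset (List Bool))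
    (hP : t.IsPruning P) (hQ : t.IsPruning Q) (hcard : P.card = Q.card)
    (Pa Pd Qa P'd : Finset (List Bool))
    (hPa : ∀ v, v ∈ Pa ↔ v ∈ P ∧ ∃ u ∈ Q, v <+: u ∧ v ≠ u)
    (hPd : ∀ v, v ∈ Pd ↔ v ∈ P ∧ ∃ u ∈ Q, u <+: v ∧ u ≠ v)
    (hQa : ∀ u, u ∈ Qa ↔ u ∈ Q ∧ ∃ v ∈ P, u <+: v ∧ u ≠ v)
    (hPa_ne : Pa.Nonempty) (hPd_ne : Pd.Nonempty) (hQa_ne : Qa.Nonempty)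
    (hP'd : ∀ v, v ∈ P'd ↔ t.IsNodePath v ∧ v ++ [false] ∈ Pd ∧ v ++ [true] ∈ Pd)
    (anc : List Bool → List Bool)
    (hanc : ∀ v ∈ P'd, anc v ∈ Qa ∧ anc v <+: v) :
    (Pa.card : ℤ) - (P'd.card : ℤ) ≤ ∑ v ∈ P'd, ((v.length : ℤ) - ((anc v).length : ℤ)) :=
  stmt9_general t P Q hP hQ hcard Pa Pd Qa P'd hPa hPd hQa hP'd anc hanc
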